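/- Let n ≥ 1 and let F and G be facets of Δ(n) such that F precedes G in the order O. Then there exists a vertex v ∈ G \ F satisfying the B-condition in G. -/

import Mathlib

/-!
Suppose no vertex of `G \ F` satisfies the B-condition. Then, by induction on `ℓ`, the `ℓ`-th
vertex of `G` is componentwise below the `ℓ`-th vertex of `F`: a vertex of `G` that also lies
in `F` cannot occur later in `F` than in `G`, since otherwise its predecessor in `F` would fit
into `G`; and a vertex of `G \ F` exceeds its predecessor by at most one in every coordinate.
If `F` had more vertices than `G`, its last vertex would then lie above all of `G` and extend
it. So `|F| = |G|` and `σ(G)` is componentwise below `σ(F)`, which cannot be lexicographically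
larger.
-/

/-- Vertices of `Δ(n)`: integer triples. -/
abbrev V : Type := ℕ × ℕ × ℕ

/-- The strict componentwise order on triples. -/
def slt (u v : V) : Prop := u.1 < v.1 ∧ u.2.1 < v.2.1 ∧ u.2.2 < v.2.2

/-- A face of `Δ(n)`: a finite subset of `{1,…,n}³` that is a chain under `slt`. -/
def IsFace (n : ℕ) (F : Finset V) : Prop :=
  (∀ v ∈ F, v.1 ∈ Finset.Icc 1 n ∧ v.2.1 ∈ Finset.Icc 1 n ∧ v.2.2 ∈ Finset.Icc 1 n) ∧
  (∀ u ∈ F, ∀ v ∈ F, u ≠ v → slt u v ∨ slt v u)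

/-- A facet of `Δ(n)`: an inclusion-maximal face. -/
def IsFacet (n : ℕ) (F : Finset V) : Prop :=
  IsFace n F ∧ ∀ G : Finset V, IsFace n G → F ⊆ G → F = G

/-- The σ-word of a list of vertices: concatenate the coordinates in order. -/
def sigmaWord (L : List V) : List ℕ :=
  L.foldr (fun v acc => v.1 :: v.2.1 :: v.2.2 :: acc) []

/-- The `ℓ`-th vertex of the (increasingly sorted) list `L` satisfies the B-condition:
either it is the first vertex and has some coordinate `> 1`, or some of its coordinates
exceeds the corresponding coordinate of the previous vertex by more than `1`. -/
def BCond (L : List V) (ℓ : ℕ) (h : ℓ < L.length) : Prop :=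
  (ℓ = 0 ∧ (1 < (L.get ⟨ℓ, h⟩).1 ∨ 1 < (L.get ⟨ℓ, h⟩).2.1 ∨ 1 < (L.get ⟨ℓ, h⟩).2.2)) ∨
  (0 < ℓ ∧
    (1 < (L.get ⟨ℓ, h⟩).1 - (L.get ⟨ℓ - 1, by omega⟩).1 ∨
     1 < (L.get ⟨ℓ, h⟩).2.1 - (L.get ⟨ℓ - 1, by omega⟩).2.1 ∨
     1 < (L.get ⟨ℓ, h⟩).2.2 - (L.get ⟨ℓ - 1, by omega⟩).2.2))

lemma slt_irrefl (v : V) : ¬ slt v v := fun h => lt_irrefl _ h.1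

lemma slt_trans {u v w : V} (huv : slt u v) (hvw : slt v w) : slt u w :=
  ⟨huv.1.trans hvw.1, huv.2.1.trans hvw.2.1, huv.2.2.trans hvw.2.2⟩

instance : IsStrictOrder V slt where
  irrefl := slt_irrefl
  trans _ _ _ := slt_trans

lemma le_of_slt {u v : V} (h : slt u v) : u ≤ v := ⟨h.1.le, h.2.1.le, h.2.2.le⟩

lemma slt_of_le_of_slt {u v w : V} (huv : u ≤ v) (hvw : slt v w) : slt u w :=
  ⟨huv.1.trans_lt hvw.1, huv.2.1.trans_lt hvw.2.1, huv.2.2.trans_lt hvw.2.2⟩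

lemma slt_of_slt_of_le {u v w : V} (huv : slt u v) (hvw : v ≤ w) : slt u w :=
  ⟨huv.1.trans_le hvw.1, huv.2.1.trans_le hvw.2.1, huv.2.2.trans_le hvw.2.2⟩

lemma slt_getElem {L : List V} (hL : L.Pairwise slt) {i j : ℕ} {hi : i < L.length}
    {hj : j < L.length} (hij : i < j) : slt L[i] L[j] :=
  List.pairwise_iff_getElem.mp hL i j hi hj hij

lemma getElem_le_getElem {L : List V} (hL : L.Pairwise slt) {i j : ℕ} {hi : i < L.length}
    {hj : j < L.length} (hij : i ≤ j) : L[i] ≤ L[j] := by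
  rcases hij.lt_or_eq with hij | rfl
  · exact le_of_slt (slt_getElem hL hij)
  · exact le_rfl

lemma IsFace.one_le {n : ℕ} {F : Finset V} (hF : IsFace n F) {v : V} (hv : v ∈ F) :
    (1, 1, 1) ≤ v := by
  obtain ⟨h₁, h₂, h₃⟩ := hF.1 v hv
  exact ⟨(Finset.mem_Icc.mp h₁).1, (Finset.mem_Icc.mp h₂).1, (Finset.mem_Icc.mp h₃).1⟩

lemma IsFacet.not_forall_comparable {n : ℕ} {F G : Finset V} (hG : IsFacet n G)
    (hF : IsFace n F) {x : V} (hx : x ∈ F) : ¬ ∀ y ∈ G, slt x y ∨ slt y x := by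
  intro hcmp
  have hxG : x ∉ G := fun h => (hcmp x h).elim (slt_irrefl x) (slt_irrefl x)
  have hface : IsFace n (insert x G) := by
    refine ⟨(Finset.forall_mem_insert _ _ _).mpr ⟨hF.1 x hx, hG.1.1⟩, ?_⟩
    simp only [Finset.mem_insert]
    rintro u (rfl | hu) v (rfl | hv) huv
    · exact absurd rfl huv
    · exact hcmp v hv
    · exact (hcmp u hu).symm
    · exact hG.1.2 u hu v hv huv
  exact hxG (hG.2 _ hface (Finset.subset_insert x G) ▸ Finset.mem_insert_self x G)

lemma getElem_zero_le_of_not_BCond {L : List V} (h : 0 < L.length) (hB : ¬ BCond L 0 h)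
    {u : V} (hu : (1, 1, 1) ≤ u) : L[0] ≤ u := by
  simp only [BCond, List.get_eq_getElem, true_and, lt_irrefl, false_and, or_false] at hB
  obtain ⟨hu₁, hu₂, hu₃⟩ : 1 ≤ u.1 ∧ 1 ≤ u.2.1 ∧ 1 ≤ u.2.2 := hu
  exact ⟨by omega, by omega, by omega⟩

lemma getElem_succ_le_of_not_BCond {L : List V} {ℓ : ℕ} (h : ℓ + 1 < L.length)
    (hB : ¬ BCond L (ℓ + 1) h) {u w : V} (hu : L[ℓ] ≤ u) (huw : slt u w) : L[ℓ + 1] ≤ w := by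
  simp only [BCond, List.get_eq_getElem, Nat.add_sub_cancel, Nat.succ_ne_zero, false_and,
    Nat.succ_pos, true_and, false_or] at hB
  obtain ⟨hu₁, hu₂, hu₃⟩ := hu
  obtain ⟨hw₁, hw₂, hw₃⟩ := huw
  exact ⟨by omega, by omega, by omega⟩

lemma not_lex_of_forall₂_le {α : Type*} [Preorder α] {a b : List α}
    (h : List.Forall₂ (· ≤ ·) b a) : ¬ List.Lex (· < ·) a b := by
  induction h with
  | nil => exact fun hl => nomatch hl
  | cons hyx _ ih =>
    intro hl
    cases hl with
    | rel h' => exact h'.not_ge hyx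
    | cons h' => exact ih h'

lemma forall₂_le_sigmaWord {L L' : List V} (h : List.Forall₂ (· ≤ ·) L L') :
    List.Forall₂ (· ≤ ·) (sigmaWord L) (sigmaWord L') := by
  induction h with
  | nil => exact .nil
  | cons hv _ ih => exact .cons hv.1 (.cons hv.2.1 (.cons hv.2.2 ih))

section Dominance

variable {n : ℕ} {LF LG : List V}

lemma not_fits_between (hF : IsFace n LF.toFinset) (hG : IsFacet n LG.toFinset)
    (hLF : LF.Pairwise slt) {k p : ℕ} (hp : p < LF.length) (hkp : k ≤ p)
    (hbelow : ∀ j < k, ∀ (h₁ : j < LG.length) (h₂ : j < LF.length), LG[j] ≤ LF[j])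
    (habove : ∀ j (h : j < LG.length), k ≤ j → slt LF[p] LG[j]) : False := by
  refine hG.not_forall_comparable hF (List.mem_toFinset.mpr (List.getElem_mem hp)) ?_
  intro y hy
  obtain ⟨j, hj, rfl⟩ := List.mem_iff_getElem.mp (List.mem_toFinset.mp hy)
  rcases lt_or_ge j k with hjk | hkj
  · exact .inr (slt_of_le_of_slt (hbelow j hjk hj (by omega)) (slt_getElem hLF (by omega)))
  · exact .inl (habove j hj hkj)

lemma index_le_of_getElem_eq (hF : IsFace n LF.toFinset) (hG : IsFacet n LG.toFinset)
    (hLF : LF.Pairwise slt) (hLG : LG.Pairwise slt) {ℓ m : ℕ} (hℓ : ℓ < LG.length)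
    (hm : m < LF.length) (heq : LF[m] = LG[ℓ])
    (hbelow : ∀ j < ℓ, ∀ (h₁ : j < LG.length) (h₂ : j < LF.length), LG[j] ≤ LF[j]) :
    m ≤ ℓ := by
  by_contra! hℓm
  refine not_fits_between hF hG hLF (p := m - 1) (by omega) (by omega) hbelow ?_
  intro j hj hℓj
  have hpred : slt LF[m - 1] LF[m] := slt_getElem hLF (by omega)
  exact slt_of_slt_of_le (heq ▸ hpred) (getElem_le_getElem hLG hℓj)

lemma getElem_le_getElem_of_forall_not_BCond (hF : IsFace n LF.toFinset)
    (hG : IsFacet n LG.toFinset) (hLF : LF.Pairwise slt) (hLG : LG.Pairwise slt)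
    (hB : ∀ ℓ (h : ℓ < LG.length), LG[ℓ] ∉ LF → ¬ BCond LG ℓ h) :
    ∀ ℓ (h₁ : ℓ < LG.length) (h₂ : ℓ < LF.length), LG[ℓ] ≤ LF[ℓ] := by
  intro ℓ
  induction ℓ using Nat.strong_induction_on with
  | _ ℓ ih =>
  intro h₁ h₂
  by_cases hmem : LG[ℓ] ∈ LF
  · obtain ⟨m, hm, heq⟩ := List.mem_iff_getElem.mp hmem
    exact heq ▸ getElem_le_getElem hLF (index_le_of_getElem_eq hF hG hLF hLG h₁ hm heq ih)
  · cases ℓ with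
    | zero => exact getElem_zero_le_of_not_BCond h₁ (hB 0 h₁ hmem) (hF.one_le (by simp))
    | succ ℓ =>
      have hprev : LG[ℓ] ≤ LF[ℓ] := ih ℓ (by omega) (by omega) (by omega)
      have hstep : slt LF[ℓ] LF[ℓ + 1] := slt_getElem hLF (by omega)
      exact getElem_succ_le_of_not_BCond h₁ (hB _ h₁ hmem) hprev hstep

lemma length_le_length_of_forall_not_BCond (hF : IsFace n LF.toFinset)
    (hG : IsFacet n LG.toFinset) (hLF : LF.Pairwise slt) (hLG : LG.Pairwise slt)
    (hB : ∀ ℓ (h : ℓ < LG.length), LG[ℓ] ∉ LF → ¬ BCond LG ℓ h) :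
    LF.length ≤ LG.length := by
  by_contra! hlt
  exact not_fits_between hF hG hLF (k := LG.length) (p := LF.length - 1) (by omega) (by omega)
    (fun j _ => getElem_le_getElem_of_forall_not_BCond hF hG hLF hLG hB j)
    (fun j h hj => absurd h (by omega))

end Dominance

theorem exists_BCond_vertex_general (n : ℕ) (F G : Finset V)
    (hF : IsFacet n F) (hG : IsFacet n G)
    (LF LG : List V) (hsF : LF.Chain' slt) (hsG : LG.Chain' slt)
    (htF : LF.toFinset = F) (htG : LG.toFinset = G)
    (hO : G.card < F.card ∨
      (F.card = G.card ∧ List.Lex (· < ·) (sigmaWord LF) (sigmaWord LG))) :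
    ∃ ℓ : ℕ, ∃ h : ℓ < LG.length, LG.get ⟨ℓ, h⟩ ∈ G \ F ∧ BCond LG ℓ h := by
  subst htF htG
  by_contra! hcon
  have hLF : LF.Pairwise slt := List.isChain_iff_pairwise.mp hsF
  have hLG : LG.Pairwise slt := List.isChain_iff_pairwise.mp hsG
  have hB : ∀ ℓ (h : ℓ < LG.length), LG[ℓ] ∉ LF → ¬ BCond LG ℓ h :=
    fun ℓ h hℓ => hcon ℓ h (by simpa using hℓ)
  have hdom := getElem_le_getElem_of_forall_not_BCond hF.1 hG hLF hLG hB
  have hlen := length_le_length_of_forall_not_BCond hF.1 hG hLF hLG hB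
  rw [List.toFinset_card_of_nodup hLF.nodup, List.toFinset_card_of_nodup hLG.nodup] at hO
  rcases hO with hlt | ⟨hcard, hlex⟩
  · omega
  · exact not_lex_of_forall₂_le
      (forall₂_le_sigmaWord (List.forall₂_iff_get.mpr ⟨hcard.symm, fun i h₁ h₂ => hdom i h₁ h₂⟩))
      hlex

/-- Lemma 5.7: if the facet `F` precedes the facet `G` in the order `O`
(larger cardinality first, then lexicographically smaller σ-word first), then some
vertex of `G \ F` satisfies the B-condition in `G`. -/
theorem exists_BCond_vertex (n : ℕ) (hn : 1 ≤ n) (F G : Finset V)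
    (hF : IsFacet n F) (hG : IsFacet n G)
    (LF LG : List V) (hsF : LF.Chain' slt) (hsG : LG.Chain' slt)
    (htF : LF.toFinset = F) (htG : LG.toFinset = G)
    (hO : G.card < F.card ∨
      (F.card = G.card ∧ List.Lex (· < ·) (sigmaWord LF) (sigmaWord LG))) :
    ∃ ℓ : ℕ, ∃ h : ℓ < LG.length, LG.get ⟨ℓ, h⟩ ∈ G \ F ∧ BCond LG ℓ h :=
  exists_BCond_vertex_general n F G hF hG LF LG hsF hsG htF htG hO
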